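/- arXiv:2402.10033 — 2 statements merged into one kernel-verified Lean document; each statement's English description precedes it below -/
import Mathlib

section
/- Consider the finite-horizon Markov decision setup with deterministic transitions: let A be a finite nonempty type of actions, Z a type of states, F : Z → A → Z a transition map, z₀ ∈ Z an initial state, and N ∈ ℕ a horizon; let π : ℝ → Z → A → ℝ be a stochastic policy such that for every parameter θ ∈ ℝ and state z ∈ Z, π θ z u > 0 for all u ∈ A and ∑_{u ∈ A} π θ z u = 1, and for each (z, u) the map θ ↦ π θ z u is differentiable; for an action sequence u : {0,…,N} → A define states recursively by z_0(u) = z₀ and z_{i+1}(u) = F (z_i(u)) (u_i), and the trajectory probability P θ u = ∏_{i=0}^{N} π θ (z_i(u)) (u_i). Let r : {0,…,N} → Z → A → ℝ be per-step rewards and R(u) = ∑_{i=0}^{N} r_i (z_i(u)) (u_i) the total return. Then for every θ₀ ∈ ℝ the expected return Ψ(θ) = ∑_{u} P θ u · R(u) (sum over all action sequences) is differentiable at θ₀ with derivative Ψ'(θ₀) = ∑_{u} P θ₀ u · (∑_{i=0}^{N} (d/dθ)|_{θ=θ₀} log (π θ (z_i(u)) (u_i))) · R(u). -/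
/-- The state at step `i` of the deterministic trajectory determined by the
transition map `F`, the initial state `z₀`, and the action sequence `u`. -/
def traj {A Z : Type*} {N : ℕ} (F : Z → A → Z) (z₀ : Z) (u : Fin (N+1) → A) : ℕ → Z
  | 0 => z₀
  | (i+1) => F (traj F z₀ u i) (u ⟨i % (N+1), Nat.mod_lt i (Nat.succ_pos N)⟩)

lemma prod_log_deriv {n : ℕ} (g : Fin n → ℝ → ℝ) (θ₀ : ℝ)
    (hd : ∀ i, DifferentiableAt ℝ (g i) θ₀) (hp : ∀ i θ, 0 < g i θ) :
    HasDerivAt (fun θ => ∏ i, g i θ)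
      ((∏ i, g i θ₀) * ∑ i, deriv (fun θ => Real.log (g i θ)) θ₀) θ₀ := by
  have h := HasDerivAt.fun_finsetProd (u := Finset.univ) (f := g)
    (f' := fun i => deriv (g i) θ₀) (fun i _ => (hd i).hasDerivAt)
  have hne : ∀ i, g i θ₀ ≠ 0 := fun i => (hp i θ₀).ne'
  have hlog : ∀ i, deriv (fun θ => Real.log (g i θ)) θ₀ = deriv (g i) θ₀ / g i θ₀ :=
    fun i => (((hd i).hasDerivAt).log (hne i)).deriv
  refine h.congr_deriv ?_
  symm
  rw [Finset.mul_sum]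
  refine Finset.sum_congr rfl fun i _ => ?_
  rw [hlog i, smul_eq_mul, ← Finset.prod_erase_mul _ _ (Finset.mem_univ i)]
  field_simp [hne i]

/-- Policy gradient theorem (finite-horizon, finite actions, deterministic
transitions): the derivative of the expected return equals the expectation of
the total return weighted by the sum of the per-step scores. -/
theorem policy_gradient {A Z : Type*} [Fintype A] [Nonempty A]
    (F : Z → A → Z) (z₀ : Z) (N : ℕ)
    (π : ℝ → Z → A → ℝ)
    (hpos : ∀ θ z u, 0 < π θ z u)
    (hsum : ∀ θ z, ∑ u, π θ z u = 1)
    (hdiff : ∀ z u, Differentiable ℝ (fun θ => π θ z u))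
    (r : Fin (N+1) → Z → A → ℝ) (θ₀ : ℝ) :
    HasDerivAt
      (fun θ => ∑ u : Fin (N+1) → A,
        (∏ i : Fin (N+1), π θ (traj F z₀ u i) (u i)) *
        (∑ i : Fin (N+1), r i (traj F z₀ u i) (u i)))
      (∑ u : Fin (N+1) → A,
        (∏ i : Fin (N+1), π θ₀ (traj F z₀ u i) (u i)) *
        (∑ i : Fin (N+1), deriv (fun θ => Real.log (π θ (traj F z₀ u i) (u i))) θ₀) *
        (∑ i : Fin (N+1), r i (traj F z₀ u i) (u i)))
      θ₀ := by
  apply HasDerivAt.fun_sum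
  intro u _
  exact (prod_log_deriv (fun i θ => π θ (traj F z₀ u i) (u i)) θ₀
    (fun i => (hdiff _ _).differentiableAt) (fun i θ => hpos θ _ _)).mul_const _
end

section
/- Consider the finite-horizon Markov decision setup with deterministic transitions: let A be a finite nonempty type of actions, Z a type of states, F : Z → A → Z a transition map, z₀ ∈ Z an initial state, and N ∈ ℕ a horizon; let π : ℝ → Z → A → ℝ be a stochastic policy such that for every parameter θ ∈ ℝ and state z ∈ Z, π θ z u > 0 for all u ∈ A and ∑_{u ∈ A} π θ z u = 1, and for each (z, u) the map θ ↦ π θ z u is differentiable; for an action sequence u : {0,…,N} → A define states recursively by z_0(u) = z₀ and z_{i+1}(u) = F (z_i(u)) (u_i), and the trajectory probability P θ u = ∏_{i=0}^{N} π θ (z_i(u)) (u_i). Let r : {0,…,N} → Z → A → ℝ be per-step rewards, R(u) = ∑_{i=0}^{N} r_i (z_i(u)) (u_i) the total return, and J_k(u) = ∑_{i=k}^{N} r_i (z_i(u)) (u_i) the return-to-go from step k. Then for every θ₀ ∈ ℝ, the derivative of the expected return Ψ(θ) = ∑_{u} P θ u · R(u) at θ₀ equals ∑_{u} P θ₀ u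 · ∑_{i=0}^{N} (d/dθ)|_{θ=θ₀} log (π θ (z_i(u)) (u_i)) · J_i(u); that is, in the policy gradient formula the total return multiplying the score at step i may be replaced by the return-to-go from step i. -/
section Aux

set_option linter.unusedSectionVars false

variable {A Z : Type*} [Fintype A] [Nonempty A]

lemma traj_congr {N : ℕ} (F : Z → A → Z) (z₀ : Z) (u v : Fin (N+1) → A) :
    ∀ i : ℕ, (∀ j : Fin (N+1), (j : ℕ) < i → u j = v j) → traj F z₀ u i = traj F z₀ v i := by
  intro i
  induction i with
  | zero => intro _; rfl
  | succ i ih =>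
    intro h
    simp only [traj]
    rw [ih (fun j hj => h j (Nat.lt_succ_of_lt hj)),
      h ⟨i % (N+1), Nat.mod_lt i (Nat.succ_pos N)⟩ (Nat.lt_succ_of_le (Nat.mod_le i (N+1)))]

lemma traj_snoc {N : ℕ} (F : Z → A → Z) (z₀ : Z) (u : Fin (N+1) → A) (a : A) :
    ∀ i : ℕ, i ≤ N + 1 → traj F z₀ (Fin.snoc u a) i = traj F z₀ u i := by
  intro i
  induction i with
  | zero => intro _; rfl
  | succ i ih =>
    intro h
    have hi : i ≤ N := Nat.lt_succ_iff.mp h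
    simp only [traj]
    rw [ih (Nat.le_succ_of_le hi)]
    congr 1
    have h1 : (⟨i % (N+1+1), Nat.mod_lt i (Nat.succ_pos (N+1))⟩ : Fin (N+2))
        = Fin.castSucc ⟨i, Nat.lt_succ_of_le hi⟩ := by
      apply Fin.ext
      simp [Nat.mod_eq_of_lt (by omega : i < N + 2)]
    rw [h1, Fin.snoc_castSucc]
    congr 1
    apply Fin.ext
    simp [Nat.mod_eq_of_lt (by omega : i < N + 1)]

lemma sum_pi_snoc {n : ℕ} (f : (Fin (n+1) → A) → ℝ) :
    ∑ u : Fin (n+1) → A, f u = ∑ u : Fin n → A, ∑ a : A, f (Fin.snoc u a) := by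
  rw [← Fintype.sum_equiv (Fin.snocEquiv (fun _ : Fin (n+1) => A))
      (fun p => f (Fin.snoc p.2 p.1)) f (fun p => rfl), Fintype.sum_prod_type]
  exact Finset.sum_comm

lemma sum_deriv_zero (π : ℝ → Z → A → ℝ)
    (hsum : ∀ θ z, ∑ u, π θ z u = 1)
    (hdiff : ∀ z u, Differentiable ℝ (fun θ => π θ z u)) (θ₀ : ℝ) (z : Z) :
    ∑ a : A, deriv (fun θ => π θ z a) θ₀ = 0 := by
  have h : HasDerivAt (fun θ => ∑ a : A, π θ z a)
      (∑ a : A, deriv (fun θ => π θ z a) θ₀) θ₀ :=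
    HasDerivAt.fun_sum fun a _ => ((hdiff z a) θ₀).hasDerivAt
  have h2 : (fun θ => ∑ a : A, π θ z a) = fun _ => (1:ℝ) := funext fun θ => hsum θ z
  rw [h2] at h
  exact h.unique (hasDerivAt_const θ₀ 1)

lemma keyZ_last (F : Z → A → Z) (π : ℝ → Z → A → ℝ)
    (hpos : ∀ θ z u, 0 < π θ z u)
    (hsum : ∀ θ z, ∑ u, π θ z u = 1)
    (hdiff : ∀ z u, Differentiable ℝ (fun θ => π θ z u)) (θ₀ : ℝ)
    (N : ℕ) (z₀ : Z) (f : (Fin (N+1) → A) → ℝ)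
    (hf : ∀ u v, (∀ j : Fin (N+1), (j:ℕ) < N → u j = v j) → f u = f v) :
    ∑ u : Fin (N+1) → A, (∏ i : Fin (N+1), π θ₀ (traj F z₀ u i) (u i)) *
      (deriv (fun θ => π θ (traj F z₀ u ((Fin.last N : Fin (N+1)) : ℕ)) (u (Fin.last N))) θ₀ /
        π θ₀ (traj F z₀ u ((Fin.last N : Fin (N+1)) : ℕ)) (u (Fin.last N))) * f u = 0 := by
  rw [sum_pi_snoc]
  refine Finset.sum_eq_zero fun u' _ => ?_
  obtain ⟨b⟩ := ‹Nonempty A›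
  set v : Fin (N+1) → A := Fin.snoc u' b with hv
  have hagree : ∀ (a : A) (j : Fin (N+1)), (j:ℕ) < N → (Fin.snoc u' a : Fin (N+1) → A) j = v j := by
    intro a j hj
    have hj' : j = Fin.castSucc ⟨(j:ℕ), hj⟩ := Fin.ext rfl
    rw [hv, hj', Fin.snoc_castSucc, Fin.snoc_castSucc]
  have htr : ∀ (a : A) (i : ℕ), i ≤ N → traj F z₀ (Fin.snoc u' a) i = traj F z₀ v i := by
    intro a i hi
    exact traj_congr F z₀ _ _ i (fun j hj => hagree a j (lt_of_lt_of_le hj hi))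
  have hterm : ∀ a : A,
      (∏ i : Fin (N+1), π θ₀ (traj F z₀ (Fin.snoc u' a) i) ((Fin.snoc u' a : Fin (N+1) → A) i)) *
        (deriv (fun θ => π θ (traj F z₀ (Fin.snoc u' a) ((Fin.last N : Fin (N+1)) : ℕ))
            ((Fin.snoc u' a : Fin (N+1) → A) (Fin.last N))) θ₀ /
          π θ₀ (traj F z₀ (Fin.snoc u' a) ((Fin.last N : Fin (N+1)) : ℕ))
            ((Fin.snoc u' a : Fin (N+1) → A) (Fin.last N))) * f (Fin.snoc u' a)
      = ((∏ i : Fin N, π θ₀ (traj F z₀ v (i:ℕ)) (u' i)) * f v) *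
          deriv (fun θ => π θ (traj F z₀ v N) a) θ₀ := by
    intro a
    have e0 : (Fin.snoc u' a : Fin (N+1) → A) (Fin.last N) = a := Fin.snoc_last _ _
    have e1 : traj F z₀ (Fin.snoc u' a) ((Fin.last N : Fin (N+1)) : ℕ) = traj F z₀ v N := by
      simp only [Fin.val_last]; exact htr a N le_rfl
    have e2 : (∏ i : Fin (N+1), π θ₀ (traj F z₀ (Fin.snoc u' a) i) ((Fin.snoc u' a : Fin (N+1) → A) i))
        = (∏ i : Fin N, π θ₀ (traj F z₀ v (i:ℕ)) (u' i)) * π θ₀ (traj F z₀ v N) a := by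
      rw [Fin.prod_univ_castSucc]
      congr 1
      · refine Finset.prod_congr rfl fun i _ => ?_
        rw [Fin.snoc_castSucc]
        congr 1
        simp only [Fin.coe_castSucc]
        exact htr a i (le_of_lt i.2)
      · rw [e0, e1]
    have e3 : f (Fin.snoc u' a) = f v := hf _ _ (hagree a)
    rw [e0, e1, e2, e3]
    have hne : π θ₀ (traj F z₀ v N) a ≠ 0 := ne_of_gt (hpos _ _ _)
    field_simp
  rw [Finset.sum_congr rfl fun a _ => hterm a, ← Finset.mul_sum,
    sum_deriv_zero π hsum hdiff θ₀ (traj F z₀ v N), mul_zero]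

lemma keyZ (F : Z → A → Z) (π : ℝ → Z → A → ℝ)
    (hpos : ∀ θ z u, 0 < π θ z u)
    (hsum : ∀ θ z, ∑ u, π θ z u = 1)
    (hdiff : ∀ z u, Differentiable ℝ (fun θ => π θ z u)) (θ₀ : ℝ) :
    ∀ (N : ℕ) (z₀ : Z) (k : Fin (N+1)) (f : (Fin (N+1) → A) → ℝ),
    (∀ u v, (∀ j : Fin (N+1), (j:ℕ) < (k:ℕ) → u j = v j) → f u = f v) →
    ∑ u : Fin (N+1) → A, (∏ i : Fin (N+1), π θ₀ (traj F z₀ u i) (u i)) *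
      (deriv (fun θ => π θ (traj F z₀ u (k:ℕ)) (u k)) θ₀ /
        π θ₀ (traj F z₀ u (k:ℕ)) (u k)) * f u = 0 := by
  intro N
  induction N with
  | zero =>
    intro z₀ k f hf
    have hk : k = Fin.last 0 := Fin.ext (by omega)
    subst hk
    exact keyZ_last F π hpos hsum hdiff θ₀ 0 z₀ f (by simpa using hf)
  | succ N ih =>
    intro z₀ k f hf
    by_cases hk : k = Fin.last (N+1)
    · subst hk
      exact keyZ_last F π hpos hsum hdiff θ₀ (N+1) z₀ f (by simpa using hf)
    · obtain ⟨k', hk'⟩ := Fin.exists_castSucc_eq.mpr hk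
      subst hk'
      rw [sum_pi_snoc]
      obtain ⟨b⟩ := ‹Nonempty A›
      have hkN : (k' : ℕ) ≤ N := Nat.lt_succ_iff.mp k'.2
      have hstep : ∀ u' : Fin (N+1) → A,
          (∑ a : A, (∏ i : Fin (N+2), π θ₀ (traj F z₀ (Fin.snoc u' a) i) ((Fin.snoc u' a : Fin (N+2) → A) i)) *
            (deriv (fun θ => π θ (traj F z₀ (Fin.snoc u' a) ((Fin.castSucc k' : Fin (N+2)) : ℕ))
                ((Fin.snoc u' a : Fin (N+2) → A) (Fin.castSucc k'))) θ₀ /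
              π θ₀ (traj F z₀ (Fin.snoc u' a) ((Fin.castSucc k' : Fin (N+2)) : ℕ))
                ((Fin.snoc u' a : Fin (N+2) → A) (Fin.castSucc k'))) * f (Fin.snoc u' a))
          = (∏ i : Fin (N+1), π θ₀ (traj F z₀ u' i) (u' i)) *
            (deriv (fun θ => π θ (traj F z₀ u' (k':ℕ)) (u' k')) θ₀ /
              π θ₀ (traj F z₀ u' (k':ℕ)) (u' k')) * f (Fin.snoc u' b) := by
        intro u'
        have hfa : ∀ a : A, f (Fin.snoc u' a) = f (Fin.snoc u' b) := by
          intro a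
          apply hf
          intro j hj
          have hjv : (j:ℕ) < N + 1 := by
            have := Fin.coe_castSucc k' ▸ hj
            omega
          have hj' : j = Fin.castSucc ⟨(j:ℕ), hjv⟩ := Fin.ext rfl
          rw [hj', Fin.snoc_castSucc, Fin.snoc_castSucc]
        have hterm : ∀ a : A,
            (∏ i : Fin (N+2), π θ₀ (traj F z₀ (Fin.snoc u' a) i) ((Fin.snoc u' a : Fin (N+2) → A) i)) *
              (deriv (fun θ => π θ (traj F z₀ (Fin.snoc u' a) ((Fin.castSucc k' : Fin (N+2)) : ℕ))
                  ((Fin.snoc u' a : Fin (N+2) → A) (Fin.castSucc k'))) θ₀ /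
                π θ₀ (traj F z₀ (Fin.snoc u' a) ((Fin.castSucc k' : Fin (N+2)) : ℕ))
                  ((Fin.snoc u' a : Fin (N+2) → A) (Fin.castSucc k'))) * f (Fin.snoc u' a)
            = ((∏ i : Fin (N+1), π θ₀ (traj F z₀ u' i) (u' i)) *
                (deriv (fun θ => π θ (traj F z₀ u' (k':ℕ)) (u' k')) θ₀ /
                  π θ₀ (traj F z₀ u' (k':ℕ)) (u' k')) * f (Fin.snoc u' b)) *
                π θ₀ (traj F z₀ u' (N+1)) a := by
          intro a
          have e0 : (Fin.snoc u' a : Fin (N+2) → A) (Fin.castSucc k') = u' k' := Fin.snoc_castSucc _ _ _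
          have e1 : traj F z₀ (Fin.snoc u' a) ((Fin.castSucc k' : Fin (N+2)) : ℕ)
              = traj F z₀ u' (k':ℕ) := by
            simp only [Fin.coe_castSucc]
            exact traj_snoc F z₀ u' a (k':ℕ) (by omega)
          have e2 : (∏ i : Fin (N+2), π θ₀ (traj F z₀ (Fin.snoc u' a) i) ((Fin.snoc u' a : Fin (N+2) → A) i))
              = (∏ i : Fin (N+1), π θ₀ (traj F z₀ u' i) (u' i)) *
                  π θ₀ (traj F z₀ u' (N+1)) a := by
            rw [Fin.prod_univ_castSucc]
            congr 1
            · refine Finset.prod_congr rfl fun i _ => ?_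
              rw [Fin.snoc_castSucc]
              congr 1
              simp only [Fin.coe_castSucc]
              exact traj_snoc F z₀ u' a (i:ℕ) (by omega)
            · rw [Fin.snoc_last]
              congr 1
              simp only [Fin.val_last]
              exact traj_snoc F z₀ u' a (N+1) le_rfl
          rw [e0, e1, e2, hfa a]
          ring
        rw [Finset.sum_congr rfl fun a _ => hterm a, ← Finset.mul_sum,
          hsum θ₀ (traj F z₀ u' (N+1)), mul_one]
      rw [Finset.sum_congr rfl fun u' _ => hstep u']
      refine ih z₀ k' (fun u' => f (Fin.snoc u' b)) ?_
      intro u v h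
      apply hf
      intro j hj
      have hjv : (j:ℕ) < N + 1 := by
        have hkc : ((Fin.castSucc k' : Fin (N+2)) : ℕ) = (k' : ℕ) := Fin.coe_castSucc k'
        omega
      have hj' : j = Fin.castSucc ⟨(j:ℕ), hjv⟩ := Fin.ext rfl
      rw [hj', Fin.snoc_castSucc, Fin.snoc_castSucc]
      refine h ⟨(j:ℕ), hjv⟩ ?_
      have hkc : ((Fin.castSucc k' : Fin (N+2)) : ℕ) = (k' : ℕ) := Fin.coe_castSucc k'
      simpa [hkc] using hj

end Aux

/-- Return-to-go form of the policy gradient theorem: the total return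
multiplying the score at step `i` may be replaced by the return-to-go from
step `i`. -/
theorem policy_gradient_return_to_go {A Z : Type*} [Fintype A] [Nonempty A]
    (F : Z → A → Z) (z₀ : Z) (N : ℕ)
    (π : ℝ → Z → A → ℝ)
    (hpos : ∀ θ z u, 0 < π θ z u)
    (hsum : ∀ θ z, ∑ u, π θ z u = 1)
    (hdiff : ∀ z u, Differentiable ℝ (fun θ => π θ z u))
    (r : Fin (N+1) → Z → A → ℝ) (θ₀ : ℝ) :
    HasDerivAt
      (fun θ => ∑ u : Fin (N+1) → A,
        (∏ i : Fin (N+1), π θ (traj F z₀ u i) (u i)) *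
        (∑ i : Fin (N+1), r i (traj F z₀ u i) (u i)))
      (∑ u : Fin (N+1) → A,
        (∏ i : Fin (N+1), π θ₀ (traj F z₀ u i) (u i)) *
        (∑ i : Fin (N+1),
          deriv (fun θ => Real.log (π θ (traj F z₀ u i) (u i))) θ₀ *
          (∑ j ∈ Finset.univ.filter (fun j : Fin (N+1) => i ≤ j),
            r j (traj F z₀ u j) (u j))))
      θ₀ := by
  classical
  have hprod : ∀ u : Fin (N+1) → A,
      HasDerivAt (fun θ => ∏ i : Fin (N+1), π θ (traj F z₀ u i) (u i))
        (∑ i : Fin (N+1), (∏ j ∈ Finset.univ.erase i, π θ₀ (traj F z₀ u j) (u j)) *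
          deriv (fun θ => π θ (traj F z₀ u i) (u i)) θ₀) θ₀ := by
    intro u
    have := HasDerivAt.fun_finsetProd (u := (Finset.univ : Finset (Fin (N+1))))
      (f := fun i θ => π θ (traj F z₀ u i) (u i))
      (f' := fun i => deriv (fun θ => π θ (traj F z₀ u i) (u i)) θ₀) (x := θ₀)
      (fun i _ => ((hdiff _ _) θ₀).hasDerivAt)
    simpa [smul_eq_mul] using this
  have hΨ : HasDerivAt
      (fun θ => ∑ u : Fin (N+1) → A,
        (∏ i : Fin (N+1), π θ (traj F z₀ u i) (u i)) *
        (∑ i : Fin (N+1), r i (traj F z₀ u i) (u i)))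
      (∑ u : Fin (N+1) → A,
        (∑ i : Fin (N+1), (∏ j ∈ Finset.univ.erase i, π θ₀ (traj F z₀ u j) (u j)) *
          deriv (fun θ => π θ (traj F z₀ u i) (u i)) θ₀) *
        (∑ i : Fin (N+1), r i (traj F z₀ u i) (u i))) θ₀ :=
    HasDerivAt.fun_sum fun u _ => (hprod u).mul_const _
  -- abbreviations
  have hne : ∀ (u : Fin (N+1) → A) (i : Fin (N+1)),
      π θ₀ (traj F z₀ u i) (u i) ≠ 0 := fun u i => ne_of_gt (hpos _ _ _)
  have hA : ∀ (u : Fin (N+1) → A) (i : Fin (N+1)),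
      (∏ j ∈ Finset.univ.erase i, π θ₀ (traj F z₀ u j) (u j)) *
        deriv (fun θ => π θ (traj F z₀ u i) (u i)) θ₀
      = (∏ j : Fin (N+1), π θ₀ (traj F z₀ u j) (u j)) *
          (deriv (fun θ => π θ (traj F z₀ u i) (u i)) θ₀ /
            π θ₀ (traj F z₀ u i) (u i)) := by
    intro u i
    rw [← Finset.mul_prod_erase Finset.univ
      (fun j : Fin (N+1) => π θ₀ (traj F z₀ u j) (u j)) (Finset.mem_univ i)]
    field_simp [hne u i]
  have hlog : ∀ (u : Fin (N+1) → A) (i : Fin (N+1)),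
      deriv (fun θ => Real.log (π θ (traj F z₀ u i) (u i))) θ₀
      = deriv (fun θ => π θ (traj F z₀ u i) (u i)) θ₀ / π θ₀ (traj F z₀ u i) (u i) :=
    fun u i => (((hdiff _ _) θ₀).hasDerivAt.log (hne u i)).deriv
  have hkey : ∀ i : Fin (N+1),
      ∑ u : Fin (N+1) → A,
        (∏ j : Fin (N+1), π θ₀ (traj F z₀ u j) (u j)) *
          (deriv (fun θ => π θ (traj F z₀ u i) (u i)) θ₀ / π θ₀ (traj F z₀ u i) (u i)) *
          (∑ j ∈ Finset.univ.filter (fun j : Fin (N+1) => ¬ i ≤ j),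
            r j (traj F z₀ u j) (u j)) = 0 := by
    intro i
    simp_rw [Finset.mul_sum]
    rw [Finset.sum_comm]
    refine Finset.sum_eq_zero fun j hj => ?_
    have hji : (j:ℕ) < (i:ℕ) := by
      have := (Finset.mem_filter.mp hj).2
      simp only [not_le] at this
      exact this
    refine keyZ F π hpos hsum hdiff θ₀ N z₀ i (fun u => r j (traj F z₀ u j) (u j)) ?_
    intro u v h
    have ht : traj F z₀ u (j:ℕ) = traj F z₀ v (j:ℕ) :=
      traj_congr F z₀ u v (j:ℕ) (fun j' hj' => h j' (hj'.trans hji))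
    show r j (traj F z₀ u (j:ℕ)) (u j) = r j (traj F z₀ v (j:ℕ)) (v j)
    rw [ht, h j hji]
  have hEq : (∑ u : Fin (N+1) → A,
        (∏ i : Fin (N+1), π θ₀ (traj F z₀ u i) (u i)) *
        (∑ i : Fin (N+1),
          deriv (fun θ => Real.log (π θ (traj F z₀ u i) (u i))) θ₀ *
          (∑ j ∈ Finset.univ.filter (fun j : Fin (N+1) => i ≤ j),
            r j (traj F z₀ u j) (u j))))
      = ∑ u : Fin (N+1) → A,
        (∑ i : Fin (N+1), (∏ j ∈ Finset.univ.erase i, π θ₀ (traj F z₀ u j) (u j)) *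
          deriv (fun θ => π θ (traj F z₀ u i) (u i)) θ₀) *
        (∑ i : Fin (N+1), r i (traj F z₀ u i) (u i)) := by
    have h1 : ∀ u : Fin (N+1) → A,
        (∑ i : Fin (N+1), (∏ j ∈ Finset.univ.erase i, π θ₀ (traj F z₀ u j) (u j)) *
          deriv (fun θ => π θ (traj F z₀ u i) (u i)) θ₀) *
        (∑ i : Fin (N+1), r i (traj F z₀ u i) (u i))
        = ∑ i : Fin (N+1),
            (∏ j : Fin (N+1), π θ₀ (traj F z₀ u j) (u j)) *
              (deriv (fun θ => π θ (traj F z₀ u i) (u i)) θ₀ / π θ₀ (traj F z₀ u i) (u i)) *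
              (∑ j : Fin (N+1), r j (traj F z₀ u j) (u j)) := by
      intro u
      rw [Finset.sum_mul]
      exact Finset.sum_congr rfl fun i _ => by rw [hA u i]
    have h2 : ∀ u : Fin (N+1) → A,
        (∏ i : Fin (N+1), π θ₀ (traj F z₀ u i) (u i)) *
        (∑ i : Fin (N+1),
          deriv (fun θ => Real.log (π θ (traj F z₀ u i) (u i))) θ₀ *
          (∑ j ∈ Finset.univ.filter (fun j : Fin (N+1) => i ≤ j),
            r j (traj F z₀ u j) (u j)))
        = ∑ i : Fin (N+1),
            (∏ j : Fin (N+1), π θ₀ (traj F z₀ u j) (u j)) *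
              (deriv (fun θ => π θ (traj F z₀ u i) (u i)) θ₀ / π θ₀ (traj F z₀ u i) (u i)) *
              (∑ j ∈ Finset.univ.filter (fun j : Fin (N+1) => i ≤ j),
                r j (traj F z₀ u j) (u j)) := by
      intro u
      rw [Finset.mul_sum]
      refine Finset.sum_congr rfl fun i _ => ?_
      rw [hlog u i]
      ring
    simp_rw [h1, h2]
    have hsplit : ∀ (u : Fin (N+1) → A) (i : Fin (N+1)),
        (∑ j : Fin (N+1), r j (traj F z₀ u j) (u j))
        = (∑ j ∈ Finset.univ.filter (fun j : Fin (N+1) => i ≤ j),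
            r j (traj F z₀ u j) (u j))
          + ∑ j ∈ Finset.univ.filter (fun j : Fin (N+1) => ¬ i ≤ j),
              r j (traj F z₀ u j) (u j) :=
      fun u i => (Finset.sum_filter_add_sum_filter_not _ _ _).symm
    calc (∑ u : Fin (N+1) → A, ∑ i : Fin (N+1),
            (∏ j : Fin (N+1), π θ₀ (traj F z₀ u j) (u j)) *
              (deriv (fun θ => π θ (traj F z₀ u i) (u i)) θ₀ / π θ₀ (traj F z₀ u i) (u i)) *
              (∑ j ∈ Finset.univ.filter (fun j : Fin (N+1) => i ≤ j),
                r j (traj F z₀ u j) (u j)))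
        = (∑ u : Fin (N+1) → A, ∑ i : Fin (N+1),
            (∏ j : Fin (N+1), π θ₀ (traj F z₀ u j) (u j)) *
              (deriv (fun θ => π θ (traj F z₀ u i) (u i)) θ₀ / π θ₀ (traj F z₀ u i) (u i)) *
              (∑ j ∈ Finset.univ.filter (fun j : Fin (N+1) => i ≤ j),
                r j (traj F z₀ u j) (u j)))
          + ∑ i : Fin (N+1), ∑ u : Fin (N+1) → A,
              (∏ j : Fin (N+1), π θ₀ (traj F z₀ u j) (u j)) *
                (deriv (fun θ => π θ (traj F z₀ u i) (u i)) θ₀ / π θ₀ (traj F z₀ u i) (u i)) *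
                (∑ j ∈ Finset.univ.filter (fun j : Fin (N+1) => ¬ i ≤ j),
                  r j (traj F z₀ u j) (u j)) := by
          rw [show (∑ i : Fin (N+1), ∑ u : Fin (N+1) → A,
              (∏ j : Fin (N+1), π θ₀ (traj F z₀ u j) (u j)) *
                (deriv (fun θ => π θ (traj F z₀ u i) (u i)) θ₀ / π θ₀ (traj F z₀ u i) (u i)) *
                (∑ j ∈ Finset.univ.filter (fun j : Fin (N+1) => ¬ i ≤ j),
                  r j (traj F z₀ u j) (u j))) = 0 from
            Finset.sum_eq_zero fun i _ => hkey i, add_zero]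
      _ = ∑ u : Fin (N+1) → A, ∑ i : Fin (N+1),
            (∏ j : Fin (N+1), π θ₀ (traj F z₀ u j) (u j)) *
              (deriv (fun θ => π θ (traj F z₀ u i) (u i)) θ₀ / π θ₀ (traj F z₀ u i) (u i)) *
              (∑ j : Fin (N+1), r j (traj F z₀ u j) (u j)) := by
          have hswap : (∑ i : Fin (N+1), ∑ u : Fin (N+1) → A,
              (∏ j : Fin (N+1), π θ₀ (traj F z₀ u j) (u j)) *
                (deriv (fun θ => π θ (traj F z₀ u i) (u i)) θ₀ / π θ₀ (traj F z₀ u i) (u i)) *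
                (∑ j ∈ Finset.univ.filter (fun j : Fin (N+1) => ¬ i ≤ j),
                  r j (traj F z₀ u j) (u j)))
              = ∑ u : Fin (N+1) → A, ∑ i : Fin (N+1),
              (∏ j : Fin (N+1), π θ₀ (traj F z₀ u j) (u j)) *
                (deriv (fun θ => π θ (traj F z₀ u i) (u i)) θ₀ / π θ₀ (traj F z₀ u i) (u i)) *
                (∑ j ∈ Finset.univ.filter (fun j : Fin (N+1) => ¬ i ≤ j),
                  r j (traj F z₀ u j) (u j)) := Finset.sum_comm
          rw [hswap, ← Finset.sum_add_distrib]
          refine Finset.sum_congr rfl fun u _ => ?_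
          rw [← Finset.sum_add_distrib]
          refine Finset.sum_congr rfl fun i _ => ?_
          rw [hsplit u i, mul_add]
  rw [hEq]
  exact hΨ
end
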